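/- arXiv:1101.0998 — 5 statements merged into one kernel-verified Lean document; each statement's English description precedes it below -/
import Mathlib

section
/- For every n ≥ 1, the element aⁿ + bⁿ of the polynomial ring ℤ[a,b] does not lie in the ideal generated by a·b and aⁿ − bⁿ. -/
open MvPolynomial

/-- For `n ≥ 1`, the element `a^n + b^n` of `ℤ[a,b]` does not lie in the
ideal generated by `a·b` and `a^n - b^n`. -/
theorem stmt_3 (n : ℕ) (hn : 1 ≤ n)
    (a b : MvPolynomial (Fin 2) ℤ) (ha : a = X 0) (hb : b = X 1) :
    a ^ n + b ^ n ∉ Ideal.span {a * b, a ^ n - b ^ n} := by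
  subst ha hb
  intro h
  obtain ⟨u, v, huv⟩ := Ideal.mem_span_pair.mp h
  -- substitution b := 0
  set φ : MvPolynomial (Fin 2) ℤ →+* MvPolynomial (Fin 2) ℤ :=
    (aeval (fun i : Fin 2 => if i = 0 then (X 0 : MvPolynomial (Fin 2) ℤ) else 0)).toRingHom
    with hφ
  -- substitution a := 0
  set ψ : MvPolynomial (Fin 2) ℤ →+* MvPolynomial (Fin 2) ℤ :=
    (aeval (fun i : Fin 2 => if i = 1 then (X 1 : MvPolynomial (Fin 2) ℤ) else 0)).toRingHom
    with hψ
  set c : MvPolynomial (Fin 2) ℤ →+* ℤ := (eval (fun _ : Fin 2 => (0:ℤ))) with hc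
  have hφX0 : φ (X 0) = X 0 := by simp [hφ]
  have hφX1 : φ (X 1) = 0 := by simp [hφ]
  have hψX0 : ψ (X 0) = 0 := by simp [hψ]
  have hψX1 : ψ (X 1) = X 1 := by simp [hψ]
  have hzero : (0 : MvPolynomial (Fin 2) ℤ) ^ n = 0 := zero_pow (by omega)
  -- apply φ to huv
  have h1 : φ v = 1 := by
    have := congrArg φ huv
    simp only [map_add, map_mul, map_sub, map_pow, hφX0, hφX1, hzero, mul_zero, zero_mul,
      sub_zero, add_zero, zero_add] at this
    have h2 : (φ v - 1) * (X 0 : MvPolynomial (Fin 2) ℤ) ^ n = 0 := by ring_nf; linear_combination this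
    rcases mul_eq_zero.mp h2 with h3 | h3
    · exact sub_eq_zero.mp h3
    · exact absurd h3 (pow_ne_zero n (X_ne_zero (0 : Fin 2)))
  have h1' : ψ v = -1 := by
    have := congrArg ψ huv
    simp only [map_add, map_mul, map_sub, map_pow, hψX0, hψX1, hzero, mul_zero, zero_mul,
      sub_zero, add_zero, zero_add, zero_sub, mul_neg] at this
    have h2 : (ψ v + 1) * (X 1 : MvPolynomial (Fin 2) ℤ) ^ n = 0 := by linear_combination -this
    rcases mul_eq_zero.mp h2 with h3 | h3
    · exact eq_neg_of_add_eq_zero_left h3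
    · exact absurd h3 (pow_ne_zero n (X_ne_zero (1 : Fin 2)))
  -- compose with evaluation at 0
  have hcφ : c.comp φ = c := by
    apply MvPolynomial.ringHom_ext
    · intro r; simp [hφ, hc]
    · intro i; fin_cases i <;> simp [hφ, hc]
  have hcψ : c.comp ψ = c := by
    apply MvPolynomial.ringHom_ext
    · intro r; simp [hψ, hc]
    · intro i; fin_cases i <;> simp [hψ, hc]
  have e1 : c v = 1 := by
    have := congrArg c h1
    rw [← RingHom.comp_apply, hcφ] at this
    simpa using this
  have e2 : c v = -1 := by
    have := congrArg c h1'
    rw [← RingHom.comp_apply, hcψ] at this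
    simpa using this
  omega
end

section
/- Let n ≥ 3 and let α₁, β₁, α₂, β₂ be integers. If the product (α₁·a + β₁·b)·(α₂·a + β₂·b) lies in the ideal of ℤ[a,b] generated by a·b and aⁿ − bⁿ, then α₁·α₂ = 0 and β₁·β₂ = 0. -/
open MvPolynomial

lemma aux7 (n : ℕ) (hn : 3 ≤ n) (c : ℤ) (v : Polynomial ℤ)
    (h : Polynomial.C c * Polynomial.X ^ 2 = v * Polynomial.X ^ n) : c = 0 := by
  have hle : ¬ n ≤ 2 := by omega
  have h2 := congrArg (fun p => Polynomial.coeff p 2) h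
  simp only [Polynomial.coeff_mul_X_pow', if_neg hle] at h2
  simpa using h2

/-- For `n ≥ 3` and integers `α₁, β₁, α₂, β₂`, if
`(α₁·a + β₁·b)(α₂·a + β₂·b)` lies in the ideal `(a·b, a^n - b^n)` of `ℤ[a,b]`,
then `α₁·α₂ = 0` and `β₁·β₂ = 0`. -/
theorem stmt_7 (n : ℕ) (hn : 3 ≤ n) (α₁ β₁ α₂ β₂ : ℤ)
    (a b : MvPolynomial (Fin 2) ℤ) (ha : a = X 0) (hb : b = X 1)
    (hmem : (C α₁ * a + C β₁ * b) * (C α₂ * a + C β₂ * b) ∈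
      Ideal.span {a * b, a ^ n - b ^ n}) :
    α₁ * α₂ = 0 ∧ β₁ * β₂ = 0 := by
  subst ha hb
  rw [Ideal.mem_span_pair] at hmem
  obtain ⟨u, v, huv⟩ := hmem
  have hn0 : n ≠ 0 := by omega
  constructor
  · have h := congrArg (aeval (R := ℤ) ![(Polynomial.X : Polynomial ℤ), 0]) huv
    simp [hn0] at h
    apply aux7 n hn (α₁ * α₂) (aeval (R := ℤ) ![(Polynomial.X : Polynomial ℤ), 0] v)
    rw [h]; simp only [map_mul, ← Polynomial.C_eq_intCast, Int.cast_id]; ring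
  · have h := congrArg (aeval (R := ℤ) ![0, (Polynomial.X : Polynomial ℤ)]) huv
    simp [hn0] at h
    apply aux7 n hn (β₁ * β₂) (-(aeval (R := ℤ) ![0, (Polynomial.X : Polynomial ℤ)] v))
    rw [neg_mul, h]; simp only [map_mul, ← Polynomial.C_eq_intCast, Int.cast_id]; ring
end

section
/- Let n ≥ 3 be odd, let R be the quotient ring ℤ[a,b]/(ab, aⁿ − bⁿ), and let x and y denote the images of a and b in R. Let f be a ring automorphism of R that maps the additive subgroup ℤx + ℤy bijectively onto itself. Then the pair (f(x), f(y)) is one of (x, y), (−x, −y), (y, x), (−y, −x). -/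
/-!
Write `f x = p x + q y` and `f y = r x + s y`. Since `f` maps the lattice `ℤx + ℤy` onto itself,
the matrix `(p q; r s)` is invertible over `ℤ`. Because `x y = 0` and `x², y²` are independent,
`f x * f y = 0` forces `p r = q s = 0`, so the matrix is diagonal or antidiagonal with entries
`±1`. Finally `x y = 0` makes `(α x + β y)ⁿ = (αⁿ + βⁿ) xⁿ`, and `xⁿ` has infinite additive order,
so `f xⁿ = f yⁿ` gives `pⁿ + qⁿ = rⁿ + sⁿ`; as `n` is odd, the two nonzero entries coincide.
Independence of `xᵏ, yᵏ` for `0 < k < n` and of `xⁿ` is read off by restricting polynomials to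
the two coordinate axes of `ℤ²`.
-/

open MvPolynomial

section
variable {A : Type*} [CommRing A] {x y : A}

theorem add_pow_of_mul_eq_zero (h : x * y = 0) {n : ℕ} (hn : n ≠ 0) :
    (x + y) ^ n = x ^ n + y ^ n := by
  obtain ⟨m, rfl⟩ : ∃ m, n = m + 1 := ⟨n - 1, by omega⟩
  clear hn
  induction m with
  | zero => simp
  | succ m ih =>
    rw [pow_succ, ih]
    linear_combination (x ^ m + y ^ m) * h

theorem zsmul_add_zsmul_mul_zsmul_add_zsmul (h : x * y = 0) (p q r s : ℤ) :
    (p • x + q • y) * (r • x + s • y) = (p * r) • x ^ 2 + (q * s) • y ^ 2 := by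
  simp only [zsmul_eq_mul]
  push_cast
  linear_combination ((p : A) * s + q * r) * h

theorem zsmul_add_zsmul_pow_of_mul_eq_zero (h : x * y = 0) {n : ℕ} (hn : n ≠ 0)
    (hpow : x ^ n = y ^ n) (p q : ℤ) : (p • x + q • y) ^ n = (p ^ n + q ^ n) • x ^ n := by
  have hpq : (p • x) * (q • y) = 0 := by rw [smul_mul_smul_comm, h, smul_zero]
  rw [add_pow_of_mul_eq_zero hpq hn, smul_pow, smul_pow, add_smul, hpow]

end

theorem Int.diag_or_antidiag_of_isUnit_det {p q r s : ℤ} (hpr : p * r = 0) (hqs : q * s = 0)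
    (hdet : IsUnit (p * s - q * r)) :
    (q = 0 ∧ r = 0 ∧ IsUnit p ∧ IsUnit s) ∨ (p = 0 ∧ s = 0 ∧ IsUnit q ∧ IsUnit r) := by
  rcases mul_eq_zero.1 hpr with rfl | rfl
  · have hqr : IsUnit (q * r) := by simpa using hdet.neg
    obtain ⟨hq, hr⟩ := IsUnit.mul_iff.1 hqr
    exact Or.inr ⟨rfl, (mul_eq_zero.1 hqs).resolve_left hq.ne_zero, hq, hr⟩
  · have hps : IsUnit (p * s) := by simpa using hdet
    obtain ⟨hp, hs⟩ := IsUnit.mul_iff.1 hps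
    exact Or.inl ⟨(mul_eq_zero.1 hqs).resolve_right hs.ne_zero, rfl, hp, hs⟩

theorem RingEquiv.apply_eq_of_map_closure_pair_eq {A : Type*} [CommRing A] {x y : A} {n : ℕ}
    (hodd : Odd n) (hxy : x * y = 0) (hpow : x ^ n = y ^ n)
    (hind₁ : LinearIndependent ℤ ![x, y]) (hind₂ : LinearIndependent ℤ ![x ^ 2, y ^ 2])
    (hxn : ∀ k : ℤ, k • x ^ n = 0 → k = 0) (f : A ≃+* A)
    (hf : (AddSubgroup.closure {x, y}).map (f : A →+* A).toAddMonoidHom =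
      AddSubgroup.closure {x, y}) :
    (f x = x ∧ f y = y) ∨ (f x = -x ∧ f y = -y) ∨
      (f x = y ∧ f y = x) ∨ (f x = -y ∧ f y = -x) := by
  have hn : n ≠ 0 := hodd.pos.ne'
  have hxL : x ∈ AddSubgroup.closure {x, y} := AddSubgroup.subset_closure (by simp)
  have hyL : y ∈ AddSubgroup.closure {x, y} := AddSubgroup.subset_closure (by simp)
  obtain ⟨p, q, hfx⟩ := AddSubgroup.mem_closure_pair.1 (hf ▸ AddSubgroup.mem_map_of_mem _ hxL)
  obtain ⟨r, s, hfy⟩ := AddSubgroup.mem_closure_pair.1 (hf ▸ AddSubgroup.mem_map_of_mem _ hyL)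
  change p • x + q • y = f x at hfx
  change r • x + s • y = f y at hfy
  obtain ⟨hpr, hqs⟩ : p * r = 0 ∧ q * s = 0 := by
    refine LinearIndependent.pair_iff.1 hind₂ _ _ ?_
    rw [← zsmul_add_zsmul_mul_zsmul_add_zsmul hxy, hfx, hfy, ← map_mul, hxy, map_zero]
  have hsum : p ^ n + q ^ n = r ^ n + s ^ n := by
    have hfpow : f x ^ n = f y ^ n := by rw [← map_pow, ← map_pow, hpow]
    rw [← hfx, ← hfy, zsmul_add_zsmul_pow_of_mul_eq_zero hxy hn hpow,
      zsmul_add_zsmul_pow_of_mul_eq_zero hxy hn hpow] at hfpow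
    rw [← sub_eq_zero]
    exact hxn _ (by rw [sub_smul, hfpow, sub_self])
  have hdet : IsUnit (p * s - q * r) := by
    have preimage : ∀ z ∈ AddSubgroup.closure {x, y}, ∃ a b : ℤ,
        (a * p + b * r) • x + (a * q + b * s) • y = z := by
      intro z hz
      obtain ⟨u, hu, rfl⟩ := AddSubgroup.mem_map.1 (hf.symm ▸ hz)
      obtain ⟨a, b, rfl⟩ := AddSubgroup.mem_closure_pair.1 hu
      refine ⟨a, b, ?_⟩
      change _ = f (a • x + b • y)
      rw [map_add, map_zsmul, map_zsmul, ← hfx, ← hfy]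
      module
    obtain ⟨a, b, hab⟩ := preimage x hxL
    obtain ⟨c, d, hcd⟩ := preimage y hyL
    obtain ⟨h₁, h₂⟩ := hind₁.eq_of_pair (hab.trans (by simp : x = (1 : ℤ) • x + (0 : ℤ) • y))
    obtain ⟨h₃, h₄⟩ := hind₁.eq_of_pair (hcd.trans (by simp : y = (0 : ℤ) • x + (1 : ℤ) • y))
    exact .of_mul_eq_one_right (a * d - b * c) (by
      linear_combination (c * q + d * s) * h₁ + h₄ - (c * p + d * r) * h₂)
  rcases Int.diag_or_antidiag_of_isUnit_det hpr hqs hdet with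
    ⟨rfl, rfl, hp, -⟩ | ⟨rfl, rfl, hq, -⟩
  · obtain rfl : p = s := hodd.pow_inj.1 (by simpa [hn] using hsum)
    rcases Int.isUnit_iff.1 hp with rfl | rfl <;> simp [← hfx, ← hfy]
  · obtain rfl : q = r := hodd.pow_inj.1 (by simpa [hn] using hsum)
    rcases Int.isUnit_iff.1 hq with rfl | rfl <;> simp [← hfx, ← hfy]

noncomputable abbrev connSumIdeal (n : ℕ) : Ideal (MvPolynomial (Fin 2) ℤ) :=
  Ideal.span {X 0 * X 1, X 0 ^ n - X 1 ^ n}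

noncomputable def axisEval (i : Fin 2) : MvPolynomial (Fin 2) ℤ →ₐ[ℤ] Polynomial ℤ :=
  aeval (Pi.single i Polynomial.X)

@[simp] theorem axisEval_X_self (i : Fin 2) : axisEval i (X i) = Polynomial.X := by
  simp [axisEval]

@[simp] theorem axisEval_X_of_ne {i j : Fin 2} (h : j ≠ i) : axisEval i (X j) = 0 := by
  simp [axisEval, h]

theorem constantCoeff_axisEval (i : Fin 2) (g : MvPolynomial (Fin 2) ℤ) :
    (axisEval i g).coeff 0 = constantCoeff g := by
  induction g using MvPolynomial.induction_on with
  | C a => simp [axisEval]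
  | add p q hp hq => simp [hp, hq]
  | mul_X p j hp => fin_cases i <;> fin_cases j <;> simp [Polynomial.mul_coeff_zero]

theorem axisEval_of_mem_connSumIdeal {n : ℕ} (hn : n ≠ 0) {g : MvPolynomial (Fin 2) ℤ}
    (hg : g ∈ connSumIdeal n) : ∃ d : MvPolynomial (Fin 2) ℤ,
      axisEval 0 g = Polynomial.X ^ n * axisEval 0 d ∧
      axisEval 1 g = -(Polynomial.X ^ n * axisEval 1 d) := by
  obtain ⟨c, d, rfl⟩ := Ideal.mem_span_pair.1 hg
  refine ⟨d, ?_, ?_⟩ <;> simp [hn, mul_comm]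

theorem coeff_axisEval_of_mem_connSumIdeal {n k : ℕ} {g : MvPolynomial (Fin 2) ℤ}
    (hg : g ∈ connSumIdeal n) (i : Fin 2) (hk : k < n) : (axisEval i g).coeff k = 0 := by
  obtain ⟨d, h₀, h₁⟩ := axisEval_of_mem_connSumIdeal (by omega) hg
  fin_cases i
  · simp [h₀, Polynomial.coeff_X_pow_mul', hk]
  · simp [h₁, Polynomial.coeff_X_pow_mul', hk]

theorem coeff_axisEval_add_of_mem_connSumIdeal {n : ℕ} (hn : n ≠ 0) {g : MvPolynomial (Fin 2) ℤ}
    (hg : g ∈ connSumIdeal n) : (axisEval 0 g).coeff n + (axisEval 1 g).coeff n = 0 := by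
  obtain ⟨d, h₀, h₁⟩ := axisEval_of_mem_connSumIdeal hn hg
  simp [h₀, h₁, Polynomial.coeff_X_pow_mul', constantCoeff_axisEval]

theorem linearIndependent_mk_X_pow {n k : ℕ} (hk : k ≠ 0) (hkn : k < n) :
    LinearIndependent ℤ ![Ideal.Quotient.mk (connSumIdeal n) (X 0) ^ k,
      Ideal.Quotient.mk (connSumIdeal n) (X 1) ^ k] := by
  refine LinearIndependent.pair_iff.2 fun s t h ↦ ?_
  have hmem : s • X 0 ^ k + t • X 1 ^ k ∈ connSumIdeal n := by
    rw [← Ideal.Quotient.eq_zero_iff_mem]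
    simpa using h
  have h₀ := coeff_axisEval_of_mem_connSumIdeal hmem 0 hkn
  have h₁ := coeff_axisEval_of_mem_connSumIdeal hmem 1 hkn
  simp [hk] at h₀ h₁
  exact ⟨h₀, h₁⟩

theorem eq_zero_of_zsmul_mk_X_pow_eq_zero {n : ℕ} (hn : n ≠ 0) {k : ℤ}
    (h : k • Ideal.Quotient.mk (connSumIdeal n) (X 0) ^ n = 0) : k = 0 := by
  have hmem : k • X 0 ^ n ∈ connSumIdeal n := by
    rw [← Ideal.Quotient.eq_zero_iff_mem]
    simpa using h
  simpa [hn] using coeff_axisEval_add_of_mem_connSumIdeal hn hmem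

theorem mk_X_zero_mul_mk_X_one (n : ℕ) :
    Ideal.Quotient.mk (connSumIdeal n) (X 0) * Ideal.Quotient.mk (connSumIdeal n) (X 1) = 0 := by
  rw [← map_mul, Ideal.Quotient.eq_zero_iff_mem]
  exact Ideal.subset_span (by simp)

theorem mk_X_zero_pow_eq_mk_X_one_pow (n : ℕ) :
    Ideal.Quotient.mk (connSumIdeal n) (X 0) ^ n =
      Ideal.Quotient.mk (connSumIdeal n) (X 1) ^ n := by
  rw [← map_pow, ← map_pow, Ideal.Quotient.eq]
  exact Ideal.subset_span (by simp)

/-- Let `n ≥ 3` be odd and `R = ℤ[a,b]/(ab, a^n - b^n)` with `x, y` the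
images of `a, b`. Any ring automorphism `f` of `R` mapping the additive subgroup
`ℤx + ℤy` bijectively onto itself satisfies
`(f x, f y) ∈ {(x, y), (-x, -y), (y, x), (-y, -x)}`. -/
theorem stmt_8 (n : ℕ) (hn : 3 ≤ n) (hodd : Odd n)
    (x y : MvPolynomial (Fin 2) ℤ ⧸
      Ideal.span {X 0 * X 1, (X 0 : MvPolynomial (Fin 2) ℤ) ^ n - X 1 ^ n})
    (hx : x = Ideal.Quotient.mk _ (X 0)) (hy : y = Ideal.Quotient.mk _ (X 1))
    (f : (MvPolynomial (Fin 2) ℤ ⧸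
        Ideal.span {X 0 * X 1, (X 0 : MvPolynomial (Fin 2) ℤ) ^ n - X 1 ^ n}) ≃+*
      (MvPolynomial (Fin 2) ℤ ⧸
        Ideal.span {X 0 * X 1, (X 0 : MvPolynomial (Fin 2) ℤ) ^ n - X 1 ^ n}))
    (hf : (AddSubgroup.closure {x, y}).map (f : _ →+* _).toAddMonoidHom =
      AddSubgroup.closure {x, y}) :
    (f x = x ∧ f y = y) ∨ (f x = -x ∧ f y = -y) ∨
      (f x = y ∧ f y = x) ∨ (f x = -y ∧ f y = -x) := by
  subst hx hy
  refine RingEquiv.apply_eq_of_map_closure_pair_eq hodd (mk_X_zero_mul_mk_X_one n)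
    (mk_X_zero_pow_eq_mk_X_one_pow n) ?_ (linearIndependent_mk_X_pow two_ne_zero (by omega))
    (fun _ ↦ eq_zero_of_zsmul_mk_X_pow_eq_zero hodd.pos.ne') f hf
  simpa using linearIndependent_mk_X_pow (n := n) one_ne_zero (by omega)
end

section
/- Let n ≥ 4 be even, let R be the quotient ring ℤ[a,b]/(ab, aⁿ − bⁿ), and let x and y denote the images of a and b in R. Let f be a ring automorphism of R that maps the additive subgroup ℤx + ℤy bijectively onto itself. Then there exist signs ε, δ ∈ {1, −1} such that (f(x), f(y)) = (ε·x, δ·y) or (f(x), f(y)) = (ε·y, δ·x). -/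
/-!
Write `f x = p x + q y` and `f y = r x + s y`. In `R` the monomials `x^k, y^k` are `ℤ`-linearly
independent for `0 < k < n`, because the monomials occurring in the ideal
are divisible by `a b` or have degree at least `n`.
From `x y = 0` we get `0 = f x * f y = p r x^2 + q s y^2`, so `p r = q s = 0` (this needs `2 < n`).
Surjectivity of `f` on `ℤx + ℤy` makes the matrix `(p q; r s)` invertible over `ℤ`, and an
invertible matrix with `p r = q s = 0` over a domain is a monomial matrix with unit entries.
-/

open MvPolynomial

noncomputable abbrev cpSumIdeal (n : ℕ) : Ideal (MvPolynomial (Fin 2) ℤ) :=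
  Ideal.span {X 0 * X 1, X 0 ^ n - X 1 ^ n}

lemma coeff_eq_zero_of_mem_cpSumIdeal {n : ℕ} {m : Fin 2 →₀ ℕ} (hmn : m 0 + m 1 < n)
    (hm : m 0 = 0 ∨ m 1 = 0) {p : MvPolynomial (Fin 2) ℤ} (hp : p ∈ cpSumIdeal n) :
    coeff m p = 0 := by
  have coeff_mul_monomial_eq_zero : ∀ (s : Fin 2 →₀ ℕ) (g : MvPolynomial (Fin 2) ℤ),
      ¬ s ≤ m → coeff m (g * monomial s 1) = 0 := fun s g hs ↦ by
    rw [coeff_mul_monomial', if_neg hs]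
  have hX : ∀ i : Fin 2, ¬ Finsupp.single i n ≤ m := fun i hle ↦ by
    have := hle i
    fin_cases i <;> simp at this <;> omega
  obtain ⟨f, g, rfl⟩ := Ideal.mem_span_pair.mp hp
  have hXY : (X 0 * X 1 : MvPolynomial (Fin 2) ℤ) =
      monomial (Finsupp.single 0 1 + Finsupp.single 1 1) 1 := by
    simp [X, monomial_mul]
  rw [coeff_add, mul_sub, coeff_sub, hXY, X_pow_eq_monomial, X_pow_eq_monomial,
    coeff_mul_monomial_eq_zero _ _ (hX 0), coeff_mul_monomial_eq_zero _ _ (hX 1),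
    coeff_mul_monomial_eq_zero]
  · simp
  · intro hle
    rcases hm with h | h
    · simpa [h] using hle 0
    · simpa [h] using hle 1

lemma eq_zero_of_zsmul_pow_add_zsmul_pow_eq_zero {n k : ℕ} (hk : 0 < k) (hkn : k < n)
    {c d : ℤ} (h : c • Ideal.Quotient.mk (cpSumIdeal n) (X 0) ^ k
      + d • Ideal.Quotient.mk (cpSumIdeal n) (X 1) ^ k = 0) :
    c = 0 ∧ d = 0 := by
  have hmem : C c * X 0 ^ k + C d * X 1 ^ k ∈ cpSumIdeal n := by
    rw [← Ideal.Quotient.eq_zero_iff_mem, ← h]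
    simp [zsmul_eq_mul]
  have hne : Finsupp.single (0 : Fin 2) k ≠ Finsupp.single 1 k := by
    simp [Finsupp.single_eq_single_iff, hk.ne']
  have h0 := coeff_eq_zero_of_mem_cpSumIdeal (m := Finsupp.single 0 k) (by simpa) (by simp) hmem
  have h1 := coeff_eq_zero_of_mem_cpSumIdeal (m := Finsupp.single 1 k) (by simpa) (by simp) hmem
  rw [coeff_add, coeff_C_mul, coeff_C_mul, coeff_X_pow, coeff_X_pow] at h0 h1
  rw [if_pos rfl, if_neg hne.symm] at h0
  rw [if_neg hne, if_pos rfl] at h1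
  exact ⟨by simpa using h0, by simpa using h1⟩

lemma isUnit_det_of_closure_pair_le_map {A : Type*} [AddCommGroup A] {x y : A}
    (hind : ∀ a b : ℤ, a • x + b • y = 0 → a = 0 ∧ b = 0) {g : A →+ A} {p q r s : ℤ}
    (hgx : g x = p • x + q • y) (hgy : g y = r • x + s • y)
    (hle : AddSubgroup.closure {x, y} ≤ (AddSubgroup.closure {x, y}).map g) :
    IsUnit (p * s - q * r) := by
  have preimage : ∀ z ∈ AddSubgroup.closure {x, y}, ∃ a b : ℤ, a • g x + b • g y = z := by
    intro z hz
    obtain ⟨u, hu, rfl⟩ := AddSubgroup.mem_map.1 (hle hz)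
    obtain ⟨a, b, rfl⟩ := AddSubgroup.mem_closure_pair.1 hu
    exact ⟨a, b, by simp⟩
  obtain ⟨a, b, hx⟩ := preimage x (AddSubgroup.subset_closure (by simp))
  obtain ⟨c, d, hy⟩ := preimage y (AddSubgroup.subset_closure (by simp))
  rw [hgx, hgy] at hx hy
  obtain ⟨e1, e2⟩ := hind (a * p + b * r - 1) (a * q + b * s) <| by
    rw [← sub_eq_zero.2 hx]; module
  obtain ⟨e3, e4⟩ := hind (c * p + d * r) (c * q + d * s - 1) <| by
    rw [← sub_eq_zero.2 hy]; module
  exact .of_mul_eq_one_right (a * d - b * c) <| by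
    linear_combination (c * q + d * s) * e1 + e4 - (a * q + b * s) * e3

lemma isUnit_diag_or_isUnit_antidiag {R : Type*} [CommRing R] [IsDomain R] {p q r s : R}
    (hpr : p * r = 0) (hqs : q * s = 0) (hdet : IsUnit (p * s - q * r)) :
    (IsUnit p ∧ IsUnit s ∧ q = 0 ∧ r = 0) ∨ (IsUnit q ∧ IsUnit r ∧ p = 0 ∧ s = 0) := by
  have : (p * s) * (q * r) = 0 := by linear_combination q * s * hpr
  rcases mul_eq_zero.mp this with hps | hqr
  · rw [hps, zero_sub, IsUnit.neg_iff] at hdet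
    have hq := isUnit_of_mul_isUnit_left hdet
    have hr := isUnit_of_mul_isUnit_right hdet
    exact Or.inr ⟨hq, hr, (mul_eq_zero.mp hpr).resolve_right hr.ne_zero,
      (mul_eq_zero.mp hqs).resolve_left hq.ne_zero⟩
  · rw [hqr, sub_zero] at hdet
    have hp := isUnit_of_mul_isUnit_left hdet
    have hs := isUnit_of_mul_isUnit_right hdet
    exact Or.inl ⟨hp, hs, (mul_eq_zero.mp hqs).resolve_right hs.ne_zero,
      (mul_eq_zero.mp hpr).resolve_left hp.ne_zero⟩

theorem stmt_9_general (n : ℕ) (hn : 4 ≤ n)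
    (x y : MvPolynomial (Fin 2) ℤ ⧸
      Ideal.span {X 0 * X 1, (X 0 : MvPolynomial (Fin 2) ℤ) ^ n - X 1 ^ n})
    (hx : x = Ideal.Quotient.mk _ (X 0)) (hy : y = Ideal.Quotient.mk _ (X 1))
    (f : (MvPolynomial (Fin 2) ℤ ⧸
        Ideal.span {X 0 * X 1, (X 0 : MvPolynomial (Fin 2) ℤ) ^ n - X 1 ^ n}) ≃+*
      (MvPolynomial (Fin 2) ℤ ⧸
        Ideal.span {X 0 * X 1, (X 0 : MvPolynomial (Fin 2) ℤ) ^ n - X 1 ^ n}))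
    (hf : (AddSubgroup.closure {x, y}).map (f : _ →+* _).toAddMonoidHom =
      AddSubgroup.closure {x, y}) :
    ∃ ε δ : ℤ, (ε = 1 ∨ ε = -1) ∧ (δ = 1 ∨ δ = -1) ∧
      ((f x = ε • x ∧ f y = δ • y) ∨ (f x = ε • y ∧ f y = δ • x)) := by
  have indep : ∀ k, 0 < k → k < n → ∀ c d : ℤ, c • x ^ k + d • y ^ k = 0 → c = 0 ∧ d = 0 := by
    subst hx hy
    exact fun k hk hkn c d ↦ eq_zero_of_zsmul_pow_add_zsmul_pow_eq_zero hk hkn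
  have hxy : x * y = 0 := by
    rw [hx, hy, ← map_mul, Ideal.Quotient.eq_zero_iff_mem]
    exact Ideal.subset_span (Set.mem_insert _ _)
  have hxG : x ∈ AddSubgroup.closure {x, y} := AddSubgroup.subset_closure (by simp)
  have hyG : y ∈ AddSubgroup.closure {x, y} := AddSubgroup.subset_closure (by simp)
  obtain ⟨p, q, hfx⟩ : ∃ p q : ℤ, p • x + q • y = f x :=
    AddSubgroup.mem_closure_pair.1 (hf ▸ AddSubgroup.mem_map_of_mem _ hxG)
  obtain ⟨r, s, hfy⟩ : ∃ r s : ℤ, r • x + s • y = f y :=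
    AddSubgroup.mem_closure_pair.1 (hf ▸ AddSubgroup.mem_map_of_mem _ hyG)
  have hdet := isUnit_det_of_closure_pair_le_map
    (fun a b h ↦ indep 1 one_pos (by omega) a b (by simpa using h)) hfx.symm hfy.symm hf.ge
  obtain ⟨hpr, hqs⟩ := indep 2 two_pos (by omega) (p * r) (q * s) (by
    have hfxy : f x * f y = 0 := by rw [← map_mul, hxy, map_zero]
    rw [← hfx, ← hfy] at hfxy
    simp only [zsmul_eq_mul] at hfxy ⊢
    push_cast
    linear_combination hfxy - ((p : _) * s + (q : _) * r) * hxy)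
  rcases isUnit_diag_or_isUnit_antidiag hpr hqs hdet with ⟨hp, hs, rfl, rfl⟩ | ⟨hq, hr, rfl, rfl⟩
  · refine ⟨p, s, Int.isUnit_iff.1 hp, Int.isUnit_iff.1 hs, .inl ⟨?_, ?_⟩⟩ <;>
      simp [← hfx, ← hfy]
  · refine ⟨q, r, Int.isUnit_iff.1 hq, Int.isUnit_iff.1 hr, .inr ⟨?_, ?_⟩⟩ <;>
      simp [← hfx, ← hfy]

/-- Let `n ≥ 4` be even and `R = ℤ[a,b]/(ab, a^n - b^n)` with `x, y` the
images of `a, b`. Any ring automorphism `f` of `R` mapping the additive subgroup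
`ℤx + ℤy` bijectively onto itself satisfies `(f x, f y) = (ε·x, δ·y)` or
`(f x, f y) = (ε·y, δ·x)` for some signs `ε, δ ∈ {1, -1}`. -/
theorem stmt_9 (n : ℕ) (hn : 4 ≤ n) (heven : Even n)
    (x y : MvPolynomial (Fin 2) ℤ ⧸
      Ideal.span {X 0 * X 1, (X 0 : MvPolynomial (Fin 2) ℤ) ^ n - X 1 ^ n})
    (hx : x = Ideal.Quotient.mk _ (X 0)) (hy : y = Ideal.Quotient.mk _ (X 1))
    (f : (MvPolynomial (Fin 2) ℤ ⧸
        Ideal.span {X 0 * X 1, (X 0 : MvPolynomial (Fin 2) ℤ) ^ n - X 1 ^ n}) ≃+*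
      (MvPolynomial (Fin 2) ℤ ⧸
        Ideal.span {X 0 * X 1, (X 0 : MvPolynomial (Fin 2) ℤ) ^ n - X 1 ^ n}))
    (hf : (AddSubgroup.closure {x, y}).map (f : _ →+* _).toAddMonoidHom =
      AddSubgroup.closure {x, y}) :
    ∃ ε δ : ℤ, (ε = 1 ∨ ε = -1) ∧ (δ = 1 ∨ δ = -1) ∧
      ((f x = ε • x ∧ f y = δ • y) ∨ (f x = ε • y ∧ f y = δ • x)) :=
  stmt_9_general n hn x y hx hy f hf
end

section
/- Let N ≥ 1 and M ≥ 3 be integers, let α₁, …, α_N be integers, and let f, g ∈ ℤ[X,Y]. If ∏_{j=1}^{N} (X + αⱼ·Y) = f·X^N + g·Y^M in ℤ[X,Y], then αⱼ = 0 for every j. -/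
/-!
Send `X ↦ S` and `Y ↦ T` into `ℤ[T][S]`. By Vieta, the coefficient of `S^(N-k)` in
`∏ (S + αⱼ T)` is `eₖ(α) T^k`, while on the right-hand side it lies in `T^M ℤ[T]` for `0 < k`.
Since `M ≥ 3` this forces `e₁(α) = e₂(α) = 0`, hence `∑ αⱼ² = e₁² - 2 e₂ = 0`.
-/

open MvPolynomial

namespace Multiset

variable {R : Type*}

theorem esymm_cons_succ [CommSemiring R] (a : R) (s : Multiset R) (k : ℕ) :
    (a ::ₘ s).esymm (k + 1) = s.esymm (k + 1) + a * s.esymm k := by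
  simp [esymm, powersetCard_cons, sum_map_mul_left]

theorem sum_map_sq_eq_esymm [CommRing R] (s : Multiset R) :
    (s.map (· ^ 2)).sum = s.esymm 1 ^ 2 - 2 * s.esymm 2 := by
  induction s using Multiset.induction_on with
  | empty => simp [esymm, powersetCard_zero_right]
  | cons a s ih =>
    rw [map_cons, sum_cons, ih, esymm_cons_succ, esymm_cons_succ]
    simp only [esymm, powersetCard_zero_left, map_singleton, prod_zero, sum_singleton]
    ring

theorem esymm_map_C_mul_X [CommSemiring R] (s : Multiset R) (n : ℕ) :
    (s.map fun a => Polynomial.C a * Polynomial.X).esymm n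
      = Polynomial.C (s.esymm n) * Polynomial.X ^ n := by
  have hs : s.map (fun a => Polynomial.C a * Polynomial.X)
      = (s.map Polynomial.C).map ((Polynomial.X : Polynomial R) • ·) := by
    rw [map_map]; congr 1; funext a; exact mul_comm _ _
  rw [hs, ← pow_smul_esymm, smul_eq_mul, mul_comm]
  simp [esymm, map_multiset_sum, map_multiset_prod, powersetCard_map, map_map]

theorem esymm_eq_zero_of_prod_X_add_C_mul_X_eq [CommRing R] (s : Multiset R)
    {F G : Polynomial (Polynomial R)} {M k : ℕ}
    (h : (s.map fun a => Polynomial.X + Polynomial.C (Polynomial.C a * Polynomial.X)).prod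
      = F * Polynomial.X ^ card s + G * Polynomial.C Polynomial.X ^ M)
    (hk : 0 < k) (hkM : k < M) : s.esymm k = 0 := by
  rcases lt_or_ge (card s) k with hks | hks
  · simp [esymm, powersetCard_eq_empty _ hks]
  have hcoeff := congrArg (Polynomial.coeff · (card s - k)) h
  simp only [← Polynomial.C_pow, Polynomial.coeff_add, Polynomial.coeff_mul_X_pow',
    Polynomial.coeff_mul_C] at hcoeff
  rw [prod_X_add_C_coeff' s (fun a => Polynomial.C a * Polynomial.X) (Nat.sub_le _ _),
    Nat.sub_sub_self hks, esymm_map_C_mul_X, if_neg (by omega), zero_add] at hcoeff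
  simpa [Polynomial.coeff_mul_X_pow', hkM.not_ge] using congrArg (Polynomial.coeff · k) hcoeff

end Multiset

theorem stmt_13_general (N M : ℕ) (hM : 3 ≤ M) (α : Fin N → ℤ)
    (f g : MvPolynomial (Fin 2) ℤ)
    (h : ∏ j, (X 0 + C (α j) * X 1) = f * X 0 ^ N + g * X 1 ^ M) :
    ∀ j, α j = 0 := by
  set s := Finset.univ.val.map α
  let φ : MvPolynomial (Fin 2) ℤ →ₐ[ℤ] Polynomial (Polynomial ℤ) :=
    aeval ![Polynomial.X, Polynomial.C Polynomial.X]
  have hφ : (s.map fun a => Polynomial.X + Polynomial.C (Polynomial.C a * Polynomial.X)).prod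
      = φ f * Polynomial.X ^ s.card + φ g * Polynomial.C Polynomial.X ^ M := by
    rw [Multiset.map_map, Multiset.card_map, ← Finset.prod_eq_multiset_prod]
    simpa [φ] using congrArg φ h
  have he₁ := s.esymm_eq_zero_of_prod_X_add_C_mul_X_eq hφ one_pos (by omega)
  have he₂ := s.esymm_eq_zero_of_prod_X_add_C_mul_X_eq hφ two_pos (by omega)
  have hsq : ∑ i, α i ^ 2 = 0 := by
    have hs := s.sum_map_sq_eq_esymm
    rw [he₁, he₂, Multiset.map_map] at hs
    simpa [Finset.sum_eq_multiset_sum] using hs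
  intro j
  exact pow_eq_zero_iff two_ne_zero |>.mp <|
    (Finset.sum_eq_zero_iff_of_nonneg fun i _ => sq_nonneg (α i)).mp hsq j (Finset.mem_univ j)

/-- For `N ≥ 1`, `M ≥ 3`, integers `α₁,…,α_N` and `f, g ∈ ℤ[X,Y]`, if
`∏_{j=1}^{N} (X + αⱼ·Y) = f·X^N + g·Y^M` in `ℤ[X,Y]`, then all `αⱼ = 0`. -/
theorem stmt_13 (N M : ℕ) (hN : 1 ≤ N) (hM : 3 ≤ M) (α : Fin N → ℤ)
    (f g : MvPolynomial (Fin 2) ℤ)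
    (h : ∏ j, (X 0 + C (α j) * X 1) = f * X 0 ^ N + g * X 1 ^ M) :
    ∀ j, α j = 0 :=
  stmt_13_general N M hM α f g h
end
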